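/- arXiv:2003.11477 — 3 statements merged into one kernel-verified Lean document; each statement's English description precedes it below -/
import Mathlib

section
/- Let f : X → Y be a submersion of smooth manifolds and Z ⊆ X a smooth submanifold. Then the conormal bundle T*_Z X is f-non-characteristic (i.e., its intersection with the image of f*(T*Y) under pullback of covectors df* lies in the zero section of T*X) if and only if the restriction f|_Z : Z → Y is a submersion. -/
open Set

/-- Lemma: for a submersion `f : X → Y` and a smooth submanifold `Z ⊆ X`, the
conormal bundle `T*_Z X` is `f`-non-characteristic (its intersection with the
image of `f*(T*Y)` under pullback of covectors `df*` lies in the zero section)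
if and only if `f|_Z : Z → Y` is a submersion. -/
theorem stmt_4 {E F : Type*}
    [NormedAddCommGroup E] [NormedSpace ℝ E] [FiniteDimensional ℝ E]
    [NormedAddCommGroup F] [NormedSpace ℝ F] [FiniteDimensional ℝ F]
    (f : E → F) (hf : ContDiff ℝ (⊤ : ℕ∞) f)
    (hsub : ∀ x : E, Function.Surjective (fderiv ℝ f x))
    (Z : Set E)
    (hZ : ∀ x ∈ Z, ∃ W : Submodule ℝ E, tangentConeAt ℝ Z x = ↑W) :
    -- `T*_Z E` is `f`-non-characteristic: any covector `η ∘ df_x` (the image of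
    -- `(x, η) ∈ f*(T*F)` under `df*`) lying in the conormal of `Z` is zero
    (∀ x ∈ Z, ∀ η : F →L[ℝ] ℝ,
        (∀ v ∈ tangentConeAt ℝ Z x, η (fderiv ℝ f x v) = 0) →
        η.comp (fderiv ℝ f x) = 0) ↔
    -- `f|_Z` is a submersion: `df_x` maps the tangent space of `Z` onto `F`
    (∀ x ∈ Z, ∀ w : F, ∃ v ∈ tangentConeAt ℝ Z x, fderiv ℝ f x v = w) := by
  constructor
  · intro h x hx w
    obtain ⟨W, hW⟩ := hZ x hx
    set D := fderiv ℝ f x with hD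
    by_contra hcon
    push_neg at hcon
    have hw : w ∉ W.map (D : E →ₗ[ℝ] F) := by
      rintro ⟨v, hv, rfl⟩
      exact hcon v (by rw [hW]; exact hv) rfl
    obtain ⟨φ, hφw, hφmap⟩ :=
      Submodule.exists_dual_map_eq_bot_of_notMem hw inferInstance
    let η : F →L[ℝ] ℝ := LinearMap.toContinuousLinearMap φ
    have hzero : η.comp D = 0 := by
      apply h x hx
      intro v hv
      rw [hW] at hv
      have : φ (D v) ∈ (W.map (D : E →ₗ[ℝ] F)).map φ :=
        Submodule.mem_map_of_mem (Submodule.mem_map_of_mem hv)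
      rw [hφmap] at this
      simpa [η] using this
    have : φ w = 0 := by
      obtain ⟨v, hv⟩ := hsub x w
      have := congrArg (fun g : E →L[ℝ] ℝ => g v) hzero
      rw [← hv]; simpa [η] using this
    exact hφw this
  · intro h x hx η hη
    ext v
    obtain ⟨u, hu, hDu⟩ := h x hx (fderiv ℝ f x v)
    have := hη u hu
    simp [hDu] at this
    simpa using this
end

section
/- Let f : X → Y be a submersion and X₀, X₁ ⊆ X submanifolds with f|_{X₀}, f|_{X₁} of constant rank. Then the pair (X₀, X₁) satisfies Thom's condition A_f if and only if the closure of Π(T*_{X₁} X) in the relative cotangent bundle T*_f, restricted over X₀, is contained in Π(T*_{X₀} X), where Π : T*X → T*_f is the projection to the relative cotangent bundle. -/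
/-
Both directions compare limits of the relative tangent planes `ker d(f|X₁)` with limits of their
annihilators. If `A_f` holds and `(x₀, ξ)` is a limit of covectors `ξᵢ` annihilating the planes at
`xᵢ ∈ X₁`, then, the planes having constant dimension, compactness of the Grassmannian gives a
subsequence converging to some `τ ⊇ ker d(f|X₀)_{x₀}`; every vector of `τ` is a limit of vectors
killed by the `ξᵢ`, so `ξ` kills `ker d(f|X₀)_{x₀}`. Conversely, if planes `Wᵢ` of the dimension
of `τ` converge to `τ`, there are automorphisms `Aᵢ → 1` with `Aᵢ τ = Wᵢ`, so every `η` vanishing on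
`τ` is the limit of the covectors `η ∘ Aᵢ⁻¹`, which vanish on `Wᵢ`. The closure condition then
forces `η` to kill `ker d(f|X₀)_{x₀}`, which therefore lies in `τ`.
-/

open Set Filter

variable {E F : Type*}
  [NormedAddCommGroup E] [NormedSpace ℝ E] [FiniteDimensional ℝ E]
  [NormedAddCommGroup F] [NormedSpace ℝ F] [FiniteDimensional ℝ F]

/-- Convergence of a sequence of planes to `τ` in the Grassmannian. -/
def PlanesTendsto (W : ℕ → Set E) (τ : Submodule ℝ E) : Prop :=
  (∀ v ∈ τ, ∃ u : ℕ → E, (∀ n, u n ∈ W n) ∧ Tendsto u atTop (nhds v)) ∧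
  ∀ n, ∃ Wn : Submodule ℝ E, W n = ↑Wn ∧ Module.finrank ℝ Wn = Module.finrank ℝ τ

/-- `ker(d(f|_Z)_x) = T_x Z ∩ ker f`, the relative tangent plane of `Z` at `x`
for the (linear model of a) submersion `f`. -/
def relKer (f : E →L[ℝ] F) (Z : Set E) (x : E) : Set E :=
  tangentConeAt ℝ Z x ∩ ↑(LinearMap.ker (f : E →ₗ[ℝ] F))

/-- Thom's condition `A_f` for the pair `(X₀, X₁)`: for every `x₀ ∈ X₀` and
sequence `x_i ∈ X₁ → x₀` whose relative tangent planes `ker(d(f|_{X₁})_{x_i})`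
converge to a plane `τ`, one has `ker(d(f|_{X₀})_{x₀}) ⊆ τ`. -/
def ConditionAf (f : E →L[ℝ] F) (X₀ X₁ : Set E) : Prop :=
  ∀ x₀ ∈ X₀, ∀ x : ℕ → E, (∀ n, x n ∈ X₁) → Tendsto x atTop (nhds x₀) →
    ∀ τ : Submodule ℝ E, PlanesTendsto (fun n => relKer f X₁ (x n)) τ →
      relKer f X₀ x₀ ⊆ ↑τ

/-- The image `Π(T*_Z X)` of the conormal bundle of `Z` in the relative
cotangent bundle `T*_f ≅ X × (ker f)*`: over `x ∈ Z` it is the annihilator of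
`ker(d(f|_Z)_x)` in `(ker f)*`. -/
def relConormal (f : E →L[ℝ] F) (Z : Set E) :
    Set (E × (↥(LinearMap.ker (f : E →ₗ[ℝ] F)) →L[ℝ] ℝ)) :=
  {p | p.1 ∈ Z ∧ ∀ v : ↥(LinearMap.ker (f : E →ₗ[ℝ] F)), (v : E) ∈ tangentConeAt ℝ Z p.1 → p.2 v = 0}

open scoped Topology

theorem Submodule.mem_of_forall_clm_eq_zero {τ : Submodule ℝ E} {v : E}
    (h : ∀ η : E →L[ℝ] ℝ, (∀ w ∈ τ, η w = 0) → η v = 0) : v ∈ τ := by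
  by_contra hv
  obtain ⟨η, hηv, hτη⟩ := Submodule.exists_le_ker_of_notMem hv
  exact hηv (h (LinearMap.toContinuousLinearMap η) fun w hw => hτη hw)

theorem exists_tendsto_one_mapsTo {W : ℕ → Submodule ℝ E} {τ : Submodule ℝ E}
    (h : ∀ v ∈ τ, ∃ u : ℕ → E, (∀ n, u n ∈ W n) ∧ Tendsto u atTop (𝓝 v)) :
    ∃ A : ℕ → E →L[ℝ] E, Tendsto A atTop (𝓝 1) ∧ ∀ n, MapsTo (A n) τ (W n) := by
  obtain ⟨Q, hQ⟩ := Submodule.ClosedComplemented.of_finiteDimensional τ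
  set b := Module.finBasis ℝ τ
  let c : Fin (Module.finrank ℝ τ) → E →L[ℝ] ℝ := fun i =>
    ContinuousLinearMap.proj i ∘L b.equivFunL.toContinuousLinearMap ∘L Q
  choose u hu hut using fun i => h (b i) (b i).2
  -- `A n` fixes `ker Q` and moves each basis vector `b i` of `τ` to its approximation `u i n`.
  refine ⟨fun n => 1 + ∑ i, (c i).smulRight (u i n - b i), ?_, fun n v hv => ?_⟩
  · have hterm : ∀ i, Tendsto (fun n => (c i).smulRight (u i n - b i)) atTop (𝓝 0) := by
      intro i
      have := ((ContinuousLinearMap.smulRightL ℝ E E (c i)).continuous.tendsto 0).comp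
        (tendsto_sub_nhds_zero_iff.2 (hut i))
      simpa [Function.comp_def] using this
    simpa using tendsto_const_nhds.add (tendsto_finsetSum _ fun i _ => hterm i)
  · have hv_sum : v = ∑ i, c i v • (b i : E) := by
      have := congrArg Subtype.val (b.sum_repr ⟨v, hv⟩)
      simp only [Submodule.coe_sum, Submodule.coe_smul] at this
      simpa [c, hQ ⟨v, hv⟩] using this.symm
    have hA : (1 + ∑ i, (c i).smulRight (u i n - b i)) v = ∑ i, c i v • u i n := by
      simp only [add_apply, one_apply_eq_self, sum_apply, ContinuousLinearMap.smulRight_apply,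
        smul_sub, Finset.sum_sub_distrib]
      nth_rewrite 1 [hv_sum]
      abel
    rw [hA]
    exact Submodule.sum_smul_mem _ _ fun i _ => hu i n

theorem PlanesTendsto.exists_tendsto_forall_eq_zero {G : Type*} [NormedAddCommGroup G]
    [NormedSpace ℝ G] {W : ℕ → Set E} {τ : Submodule ℝ E} (hW : PlanesTendsto W τ)
    {ξ : E →L[ℝ] G} (hξ : ∀ v ∈ τ, ξ v = 0) :
    ∃ ξs : ℕ → E →L[ℝ] G, Tendsto ξs atTop (𝓝 ξ) ∧ ∀ᶠ n in atTop, ∀ v ∈ W n, ξs n v = 0 := by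
  obtain ⟨hlim, hdim⟩ := hW
  choose V hWV hVdim using hdim
  obtain rfl : W = fun n => (V n : Set E) := funext hWV
  obtain ⟨A, hA, hAW⟩ := exists_tendsto_one_mapsTo (W := V) hlim
  have hinv : Tendsto (fun n => Ring.inverse (A n)) atTop (𝓝 1) := by
    simpa [Function.comp_def] using
      (NormedRing.inverse_continuousAt (1 : (E →L[ℝ] E)ˣ)).tendsto.comp hA
  refine ⟨fun n => ξ ∘L Ring.inverse (A n), ?_, ?_⟩
  · simpa [Function.comp_def, ContinuousLinearMap.one_def] using
      ((ContinuousLinearMap.compL ℝ E E G ξ).continuous.tendsto 1).comp hinv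
  filter_upwards [hA.eventually (Units.isOpen.mem_nhds isUnit_one)] with n ⟨u, hu⟩ v hv
  rw [← hu]
  let e := ContinuousLinearEquiv.unitsEquiv ℝ E u
  have hVn : τ.map (e : E →ₗ[ℝ] E) = V n := by
    refine Submodule.eq_of_le_of_finrank_eq ?_ ?_
    · rintro _ ⟨x, hx, rfl⟩
      simpa [e, hu] using hAW n hx
    · rw [hVdim n]
      exact LinearEquiv.finrank_map_eq e.toLinearEquiv τ
  obtain ⟨x, hx, rfl⟩ := hVn ▸ hv
  simpa [Ring.inverse_unit, e, ← mul_apply_eq_comp] using hξ x hx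

theorem exists_subseq_tendsto_orthonormal {G ι : Type*} [NormedAddCommGroup G]
    [InnerProductSpace ℝ G] [FiniteDimensional ℝ G] [Fintype ι] {o : ℕ → ι → G}
    (ho : ∀ n, Orthonormal ℝ (o n)) :
    ∃ g : ι → G, Orthonormal ℝ g ∧ ∃ φ : ℕ → ℕ, StrictMono φ ∧ Tendsto (o ∘ φ) atTop (𝓝 g) := by
  classical
  have hball : ∀ n, o n ∈ Metric.closedBall (0 : ι → G) 1 := fun n => by
    rw [mem_closedBall_zero_iff, pi_norm_le_iff_of_nonneg zero_le_one]
    exact fun i => ((ho n).1 i).le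
  obtain ⟨g, -, φ, hφ, hlim⟩ := tendsto_subseq_of_bounded Metric.isBounded_closedBall hball
  refine ⟨g, orthonormal_iff_ite.2 fun i j => ?_, φ, hφ, hlim⟩
  have hcoord := tendsto_pi_nhds.1 hlim
  exact tendsto_nhds_unique ((hcoord i).inner (hcoord j))
    (tendsto_const_nhds.congr fun n => (orthonormal_iff_ite.1 (ho (φ n)) i j).symm)

theorem exists_subseq_tendsto_linearIndependent (W : ℕ → Submodule ℝ E) {k : ℕ}
    (hW : ∀ n, Module.finrank ℝ (W n) = k) :
    ∃ φ : ℕ → ℕ, StrictMono φ ∧ ∃ b : ℕ → Fin k → E, (∀ n i, b n i ∈ W (φ n)) ∧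
      ∃ g : Fin k → E, LinearIndependent ℝ g ∧ Tendsto b atTop (𝓝 g) := by
  -- Orthonormal frames for a Euclidean structure on `E` are bounded, and their limits are
  -- again orthonormal, hence independent.
  obtain ⟨e⟩ : Nonempty (E ≃L[ℝ] EuclideanSpace ℝ (Fin (Module.finrank ℝ E))) := ⟨toEuclidean⟩
  have hWe : ∀ n, Module.finrank ℝ ((W n).map e.toLinearEquiv.toLinearMap) = k := fun n =>
    (LinearEquiv.finrank_map_eq e.toLinearEquiv (W n)).trans (hW n)
  have hbasis : ∀ n, ∃ v : Fin k → EuclideanSpace ℝ (Fin (Module.finrank ℝ E)),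
      Orthonormal ℝ v ∧ ∀ i, v i ∈ (W n).map e.toLinearEquiv.toLinearMap := fun n =>
    let B := (stdOrthonormalBasis ℝ ((W n).map e.toLinearEquiv.toLinearMap)).reindex
      (finCongr (hWe n))
    ⟨fun i => B i, B.orthonormal.comp_linearIsometry (Submodule.subtypeₗᵢ _), fun i => (B i).2⟩
  choose v hv hvW using hbasis
  obtain ⟨g, hg, φ, hφ, hlim⟩ := exists_subseq_tendsto_orthonormal hv
  refine ⟨φ, hφ, fun n i => e.symm (v (φ n) i), fun n i => ?_, fun i => e.symm (g i),
    hg.linearIndependent.map' e.symm.toLinearMap (LinearEquiv.ker _), ?_⟩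
  · obtain ⟨x, hx, hxv⟩ := hvW (φ n) i
    simpa [← hxv] using hx
  · exact ((continuous_pi fun i => e.symm.continuous.comp (continuous_apply i)).tendsto g).comp hlim

omit [FiniteDimensional ℝ E] in
theorem planesTendsto_span_of_tendsto {W : ℕ → Submodule ℝ E} {k : ℕ}
    (hW : ∀ n, Module.finrank ℝ (W n) = k) {b : ℕ → Fin k → E} (hb : ∀ n i, b n i ∈ W n)
    {g : Fin k → E} (hg : LinearIndependent ℝ g) (hbg : Tendsto b atTop (𝓝 g)) :
    PlanesTendsto (fun n => (W n : Set E)) (Submodule.span ℝ (range g)) := by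
  refine ⟨fun v hv => ?_, fun n =>
    ⟨W n, rfl, by rw [hW n, finrank_span_eq_card hg, Fintype.card_fin]⟩⟩
  obtain ⟨c, rfl⟩ := (Submodule.mem_span_range_iff_exists_fun ℝ).1 hv
  refine ⟨fun n => ∑ i, c i • b n i, fun n => Submodule.sum_smul_mem _ _ fun i _ => hb n i, ?_⟩
  exact tendsto_finsetSum _ fun i _ => (tendsto_pi_nhds.1 hbg i).const_smul (c i)

theorem exists_subseq_planesTendsto (W : ℕ → Submodule ℝ E) {k : ℕ}
    (hW : ∀ n, Module.finrank ℝ (W n) = k) :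
    ∃ φ : ℕ → ℕ, StrictMono φ ∧ ∃ τ : Submodule ℝ E,
      PlanesTendsto (fun n => (W (φ n) : Set E)) τ := by
  obtain ⟨φ, hφ, b, hb, g, hg, hbg⟩ := exists_subseq_tendsto_linearIndependent W hW
  exact ⟨φ, hφ, _, planesTendsto_span_of_tendsto (fun n => hW (φ n)) hb hg hbg⟩

omit [FiniteDimensional ℝ F] in
theorem closure_relConormal_inter_subset_of_conditionAf {f : E →L[ℝ] F} {X₀ X₁ : Set E}
    (hX₁ : ∃ k : ℕ, ∀ x ∈ X₁, ∃ V : Submodule ℝ E,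
      relKer f X₁ x = V ∧ Module.finrank ℝ V = k)
    (hA : ConditionAf f X₀ X₁) :
    closure (relConormal f X₁) ∩ {p | p.1 ∈ X₀} ⊆ relConormal f X₀ := by
  rintro ⟨x₀, ξ⟩ ⟨hcl, hx₀⟩
  obtain ⟨q, hq, hqt⟩ := mem_closure_iff_seq_limit.1 hcl
  obtain ⟨k, hk⟩ := hX₁
  choose V hV hVk using fun n => hk (q n).1 (hq n).1
  obtain ⟨φ, hφ, τ, hτ⟩ := exists_subseq_planesTendsto V hVk
  have hxt : Tendsto (fun n => (q (φ n)).1) atTop (𝓝 x₀) :=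
    ((continuous_fst.tendsto _).comp hqt).comp hφ.tendsto_atTop
  have hξt : Tendsto (fun n => (q (φ n)).2) atTop (𝓝 ξ) :=
    ((continuous_snd.tendsto _).comp hqt).comp hφ.tendsto_atTop
  have hτ' : PlanesTendsto (fun n => relKer f X₁ (q (φ n)).1) τ := by
    simpa only [hV] using hτ
  refine ⟨hx₀, fun v hv => ?_⟩
  obtain ⟨u, hu, hut⟩ :=
    hτ'.1 v (hA x₀ hx₀ _ (fun n => (hq (φ n)).1) hxt τ hτ' ⟨hv, v.2⟩)
  let w : ℕ → LinearMap.ker (f : E →ₗ[ℝ] F) := fun n => ⟨u n, (hu n).2⟩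
  have hwt : Tendsto w atTop (𝓝 v) := tendsto_subtype_rng.2 hut
  have hlim : Tendsto (fun n => (q (φ n)).2 (w n)) atTop (𝓝 (ξ v)) :=
    ((continuous_fst.clm_apply continuous_snd).tendsto (ξ, v)).comp (hξt.prodMk_nhds hwt)
  exact tendsto_nhds_unique hlim
    (tendsto_const_nhds.congr fun n => ((hq (φ n)).2 (w n) (hu n).1).symm)

omit [FiniteDimensional ℝ F] in
theorem conditionAf_of_closure_relConormal_inter_subset {f : E →L[ℝ] F} {X₀ X₁ : Set E}
    (h : closure (relConormal f X₁) ∩ {p | p.1 ∈ X₀} ⊆ relConormal f X₀) :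
    ConditionAf f X₀ X₁ := by
  intro x₀ hx₀ x hx hxt τ hτ w hw
  refine Submodule.mem_of_forall_clm_eq_zero fun η hη => ?_
  obtain ⟨ηs, hηt, hηs⟩ := hτ.exists_tendsto_forall_eq_zero hη
  let restrict : (E →L[ℝ] ℝ) →L[ℝ] (LinearMap.ker (f : E →ₗ[ℝ] F) →L[ℝ] ℝ) :=
    ContinuousLinearMap.precomp ℝ (LinearMap.ker (f : E →ₗ[ℝ] F)).subtypeL
  have hcl : (x₀, restrict η) ∈ closure (relConormal f X₁) := by
    refine mem_closure_of_tendsto (hxt.prodMk_nhds ((restrict.continuous.tendsto η).comp hηt)) ?_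
    filter_upwards [hηs] with n hn
    exact ⟨hx n, fun v hv => hn v ⟨hv, v.2⟩⟩
  exact (h ⟨hcl, hx₀⟩).2 ⟨w, hw.2⟩ hw.1

theorem stmt_7_general (f : E →L[ℝ] F) (X₀ X₁ : Set E)
    (hX₁ : ∃ d k : ℕ, ∀ x ∈ X₁, ∃ W : Submodule ℝ E,
      tangentConeAt ℝ X₁ x = ↑W ∧ Module.finrank ℝ W = d ∧
      Module.finrank ℝ (W ⊓ LinearMap.ker (f : E →ₗ[ℝ] F) : Submodule ℝ E) = k) :
    ConditionAf f X₀ X₁ ↔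
      closure (relConormal f X₁) ∩ {p | p.1 ∈ X₀} ⊆ relConormal f X₀ := by
  refine ⟨closure_relConormal_inter_subset_of_conditionAf ?_,
    conditionAf_of_closure_relConormal_inter_subset⟩
  obtain ⟨_, k, hk⟩ := hX₁
  refine ⟨k, fun x hx => ?_⟩
  obtain ⟨W, hW, -, hWk⟩ := hk x hx
  exact ⟨W ⊓ LinearMap.ker (f : E →ₗ[ℝ] F), by rw [relKer, hW, Submodule.coe_inf], hWk⟩

/-- Lemma 4.8: for a submersion `f` and submanifolds `X₀, X₁` with `f|_{X₀}`,
`f|_{X₁}` of constant rank, the pair `(X₀, X₁)` satisfies Thom's condition `A_f`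
if and only if the closure of `Π(T*_{X₁}X)` in the relative cotangent bundle,
restricted over `X₀`, is contained in `Π(T*_{X₀}X)`. -/
theorem stmt_7 (f : E →L[ℝ] F) (hf : Function.Surjective f) (X₀ X₁ : Set E)
    (hX₀ : ∃ d k : ℕ, ∀ x ∈ X₀, ∃ W : Submodule ℝ E,
      tangentConeAt ℝ X₀ x = ↑W ∧ Module.finrank ℝ W = d ∧
      Module.finrank ℝ (W ⊓ LinearMap.ker (f : E →ₗ[ℝ] F) : Submodule ℝ E) = k)
    (hX₁ : ∃ d k : ℕ, ∀ x ∈ X₁, ∃ W : Submodule ℝ E,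
      tangentConeAt ℝ X₁ x = ↑W ∧ Module.finrank ℝ W = d ∧
      Module.finrank ℝ (W ⊓ LinearMap.ker (f : E →ₗ[ℝ] F) : Submodule ℝ E) = k) :
    ConditionAf f X₀ X₁ ↔
      closure (relConormal f X₁) ∩ {p | p.1 ∈ X₀} ⊆ relConormal f X₀ :=
  stmt_7_general f X₀ X₁ hX₁
end

section
/- Fix n ≥ 1 and, for each proper subset a ⊊ [n], a positive radius 𝔯_a, and define r_a(z) = Σ_{i ∈ [n]∖a} z_i² on (-1,1)^n (real coordinates). Let P = {z : r_∅(z) = 𝔯_∅²} ∖ ⋃_{∅ ⊊ a ⊊ [n]} {z : r_a(z) < 𝔯_a²}. Assume the hypersurfaces S_a = {r_a = 𝔯_a²} are pairwise transverse (achievable for 𝔯_{a} ≪ 𝔯_{a'} when a' ⊊ a). Then P lies in the set where all coordinates are nonzero: P ⊆ ((-1,0) ∪ (0,1))^n, provided 𝔯_{a} chosen sufficiently small, since any point with z_i = 0 for i ∉ a and r_∅(z) = 𝔯_∅² must lie inside some excluded tube T_a. -/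
/-! If `z_i = 0`, let `a` be the support of `z`. Then `a ≠ [n]` and `r_a(z) = 0`, so `z` lies in
the tube `T_a` unless `a = ∅`; but `a = ∅` means `z = 0`, contradicting `r_∅(z) = 𝔯_∅² > 0`. -/

open Set Finset

/-- `r_a(z) = Σ_{i ∈ [n] ∖ a} z_i²`. -/
def rTube {n : ℕ} (a : Finset (Fin n)) (z : Fin n → ℝ) : ℝ :=
  ∑ i ∈ aᶜ, (z i) ^ 2

lemma rTube_eq_zero_of_forall_notMem {n : ℕ} {a : Finset (Fin n)} {z : Fin n → ℝ}
    (h : ∀ i ∉ a, z i = 0) : rTube a z = 0 :=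
  Finset.sum_eq_zero fun i hi => by rw [h i (Finset.mem_compl.mp hi)]; norm_num

lemma rTube_support_eq_zero {n : ℕ} (z : Fin n → ℝ) :
    rTube {i | z i ≠ 0} z = 0 :=
  rTube_eq_zero_of_forall_notMem fun i hi => by simpa using hi

theorem stmt_15_general (n : ℕ) (𝔯 : Finset (Fin n) → ℝ)
    (hpos : ∀ a : Finset (Fin n), a ≠ Finset.univ → 0 < 𝔯 a)
    (z : Fin n → ℝ)
    (hsphere : rTube ∅ z = (𝔯 ∅) ^ 2)
    (houtside : ∀ a : Finset (Fin n), a ≠ ∅ → a ≠ Finset.univ →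
      ¬ rTube a z < (𝔯 a) ^ 2) :
    ∀ i, z i ≠ 0 := by
  intro i hi
  set a : Finset (Fin n) := {j | z j ≠ 0}
  have ha_ne_univ : a ≠ Finset.univ := fun h => by
    have hia : i ∈ a := h ▸ Finset.mem_univ i
    simp [a, hi] at hia
  have ha_zero : rTube a z = 0 := rTube_support_eq_zero z
  rcases eq_or_ne a ∅ with ha_empty | ha_nonempty
  · have h𝔯 := hpos ∅ (ha_empty ▸ ha_ne_univ)
    rw [← ha_empty, ha_zero, ha_empty] at hsphere
    exact (pow_pos h𝔯 2).ne hsphere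
  · exact houtside a ha_nonempty ha_ne_univ (ha_zero ▸ pow_pos (hpos a ha_ne_univ) 2)

/-- The manifold-with-corners `P(𝔯)` avoids the coordinate hyperplanes: for
radii `𝔯_a > 0` chosen in decreasing order (`𝔯_{a₂} ≪ 𝔯_{a₁}` for `a₁ ⊊ a₂`),
every `z ∈ (-1,1)^n` with `r_∅(z) = 𝔯_∅²` lying outside all the open tubes
`T_a = {r_a < 𝔯_a²}` (`∅ ⊊ a ⊊ [n]`) has all coordinates nonzero:
`P ⊆ ((-1,0) ∪ (0,1))^n`.  Indeed any point with `z_i = 0` for all `i ∉ a`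
and `r_∅(z) = 𝔯_∅²` must lie inside some excluded tube `T_a`. -/
theorem stmt_15 (n : ℕ) (hn : 1 ≤ n) (𝔯 : Finset (Fin n) → ℝ)
    (hpos : ∀ a : Finset (Fin n), a ≠ Finset.univ → 0 < 𝔯 a)
    (hsmall : ∀ a₁ a₂ : Finset (Fin n), a₁ ⊂ a₂ → a₂ ≠ Finset.univ → 𝔯 a₂ < 𝔯 a₁)
    (z : Fin n → ℝ) (hz : ∀ i, |z i| < 1)
    (hsphere : rTube ∅ z = (𝔯 ∅) ^ 2)
    (houtside : ∀ a : Finset (Fin n), a ≠ ∅ → a ≠ Finset.univ →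
      ¬ rTube a z < (𝔯 a) ^ 2) :
    ∀ i, z i ≠ 0 :=
  stmt_15_general n 𝔯 hpos z hsphere houtside
end
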